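/- For all ρdf graphs G and H: if G ⊨ H, then there is a proof of H from G in the ρdf deductive system in which the map rule (1a) is used at most once, and if used, only as the last step. -/

import Mathlib

/-!
Formalization of ρdf and ρdf⊥¬ (triple languages, semantics, deductive systems),
following Muñoz et al. and "Extending RDFS with negative statements".
-/

namespace Rho

/-- URI references: the ρdf⊥¬ vocabulary elements, atomic resources `res false n`
together with their negations `res true n` (negation flips the Boolean, so ¬¬r = r),
and universal-quantification resources `star b n` = ★_{res b n}. -/
inductive URI : Type where
  | sp | sc | typ | dom | rng | botc | botp
  | res (b : Bool) (n : ℕ)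
  | star (b : Bool) (n : ℕ)
deriving DecidableEq

/-- Terms: URIs, blank nodes and literals (pairwise disjoint alphabets). -/
inductive Term : Type where
  | uri (u : URI)
  | blank (n : ℕ)
  | lit (n : ℕ)
deriving DecidableEq

/-- The ρdf vocabulary {sp, sc, type, dom, range}. -/
def rhoVoc : Set URI := {URI.sp, URI.sc, URI.typ, URI.dom, URI.rng}

/-- The ρdf⊥¬ vocabulary: ρdf plus ⊥c and ⊥p. -/
def botVoc : Set URI := rhoVoc ∪ {URI.botc, URI.botp}

def URI.isStar : URI → Prop
  | URI.star _ _ => True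
  | _ => False

def Term.isStar : Term → Prop
  | Term.uri (URI.star _ _) => True
  | _ => False

def Term.isBlank : Term → Prop
  | Term.blank _ => True
  | _ => False

def Term.isLit : Term → Prop
  | Term.lit _ => True
  | _ => False

def Term.isVoc : Term → Prop
  | Term.uri u => u ∈ rhoVoc
  | _ => False

def Term.isBotVoc : Term → Prop
  | Term.uri u => u ∈ botVoc
  | _ => False

/-- Negation of terms: flips the sign of an atomic/negated resource
(identity on all other terms, where negation is not defined). -/
def negT : Term → Term
  | Term.uri (URI.res b n) => Term.uri (URI.res (!b) n)
  | t => t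

/-- An RDF triple ⟨s, p, o⟩ ∈ UBL × U × UBL. -/
structure Triple : Type where
  s : Term
  p : URI
  o : Term
deriving DecidableEq

/-- ρdf triple: subject and object are not in the ρdf vocabulary. -/
def Triple.okRdf (τ : Triple) : Prop := ¬ τ.s.isVoc ∧ ¬ τ.o.isVoc

/-- ρdf⊥¬ triple: s, o not in the ρdf⊥¬ vocabulary, p not of the form ★_c,
s and o not both of the form ★_c, and if p is in the ρdf⊥¬ vocabulary then
neither s nor o is of the form ★_c. -/
def Triple.okN (τ : Triple) : Prop :=
  ¬ τ.s.isBotVoc ∧ ¬ τ.o.isBotVoc ∧ ¬ τ.p.isStar ∧ ¬ (τ.s.isStar ∧ τ.o.isStar) ∧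
    (τ.p ∈ botVoc → ¬ τ.s.isStar ∧ ¬ τ.o.isStar)

/-- A graph is a finite set of triples. -/
abbrev Graph := Finset Triple

/-- A ρdf graph. -/
def IsRdfGraph (G : Graph) : Prop := ∀ τ ∈ G, τ.okRdf

/-- A ρdf⊥¬ graph. -/
def IsNGraph (G : Graph) : Prop := ∀ τ ∈ G, τ.okN

/-- A ground graph contains no blank nodes. -/
def Ground (G : Graph) : Prop := ∀ τ ∈ G, ¬ τ.s.isBlank ∧ ¬ τ.o.isBlank

/-- No term of the form ★_c occurs in the graph. -/
def StarFree (G : Graph) : Prop := ∀ τ ∈ G, ¬ τ.s.isStar ∧ ¬ τ.o.isStar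

/-- The universe of a graph: the set of terms occurring in its triples. -/
def uni (G : Graph) : Set Term := {t | ∃ τ ∈ G, t = τ.s ∨ t = Term.uri τ.p ∨ t = τ.o}

def rhoVocT : Set Term := Term.uri '' rhoVoc
def botVocT : Set Term := Term.uri '' botVoc

/-- A map: a function on terms preserving URIs and literals. -/
def IsMap (μ : Term → Term) : Prop :=
  (∀ u, μ (Term.uri u) = Term.uri u) ∧ ∀ n, μ (Term.lit n) = Term.lit n

def mapT (μ : Term → Term) (τ : Triple) : Triple := ⟨μ τ.s, τ.p, μ τ.o⟩

def mapG (μ : Term → Term) (G : Graph) : Graph := G.image (mapT μ)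

/-! ### ρdf semantics -/

/-- A ρdf interpretation (raw data, with carrier the type of terms; the
interpretation of literals is the identity, as in the paper). -/
structure Interp : Type where
  ΔR : Set Term
  ΔP : Set Term
  ΔC : Set Term
  ΔL : Set Term
  extP : Term → Set (Term × Term)
  extC : Term → Set Term
  int : Term → Term

def Interp.iv (I : Interp) (e : URI) : Term := I.int (Term.uri e)

/-- `I` is a ρdf interpretation over the vocabulary `V`. -/
structure IsInterp (I : Interp) (V : Set Term) : Prop where
  finR : I.ΔR.Finite
  neR : I.ΔR.Nonempty
  finP : I.ΔP.Finite
  neP : I.ΔP.Nonempty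
  finC : I.ΔC.Finite
  neC : I.ΔC.Nonempty
  finL : I.ΔL.Finite
  neL : I.ΔL.Nonempty
  hCR : I.ΔC ⊆ I.ΔR
  hLR : I.ΔL ⊆ I.ΔR
  hlit : ∀ n, Term.lit n ∈ V → Term.lit n ∈ I.ΔL
  hextP : ∀ p ∈ I.ΔP, I.extP p ⊆ I.ΔR ×ˢ I.ΔR
  hextC : ∀ c ∈ I.ΔC, I.extC c ⊆ I.ΔR
  hint : ∀ t ∈ V, ¬ t.isBlank → I.int t ∈ I.ΔR ∪ I.ΔP
  hintlit : ∀ n, I.int (Term.lit n) = Term.lit n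
  hintblank : ∀ n, I.int (Term.blank n) ∈ I.ΔR

/-- `I` is a model of the graph `G` (reflexive-relaxed ρdf semantics). -/
structure Models (I : Interp) (G : Graph) : Prop where
  interp : IsInterp I (rhoVocT ∪ uni G)
  simple : ∀ τ ∈ G, I.iv τ.p ∈ I.ΔP ∧ (I.int τ.s, I.int τ.o) ∈ I.extP (I.iv τ.p)
  sp_trans : ∀ p q r, p ∈ I.ΔP → q ∈ I.ΔP → r ∈ I.ΔP →
    (p, q) ∈ I.extP (I.iv URI.sp) → (q, r) ∈ I.extP (I.iv URI.sp) →
    (p, r) ∈ I.extP (I.iv URI.sp)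
  sp_sub : ∀ p q, (p, q) ∈ I.extP (I.iv URI.sp) →
    p ∈ I.ΔP ∧ q ∈ I.ΔP ∧ I.extP p ⊆ I.extP q
  sc_trans : ∀ c d e, c ∈ I.ΔC → d ∈ I.ΔC → e ∈ I.ΔC →
    (c, d) ∈ I.extP (I.iv URI.sc) → (d, e) ∈ I.extP (I.iv URI.sc) →
    (c, e) ∈ I.extP (I.iv URI.sc)
  sc_sub : ∀ c d, (c, d) ∈ I.extP (I.iv URI.sc) →
    c ∈ I.ΔC ∧ d ∈ I.ΔC ∧ I.extC c ⊆ I.extC d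
  typI1 : ∀ x c, c ∈ I.ΔC → (x ∈ I.extC c ↔ (x, c) ∈ I.extP (I.iv URI.typ))
  typI2 : ∀ p c x y, (p, c) ∈ I.extP (I.iv URI.dom) → (x, y) ∈ I.extP p → x ∈ I.extC c
  typI3 : ∀ p c x y, (p, c) ∈ I.extP (I.iv URI.rng) → (x, y) ∈ I.extP p → y ∈ I.extC c
  typII1 : ∀ e ∈ rhoVoc, I.iv e ∈ I.ΔP
  typII2 : ∀ p c, (p, c) ∈ I.extP (I.iv URI.dom) → p ∈ I.ΔP ∧ c ∈ I.ΔC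
  typII3 : ∀ p c, (p, c) ∈ I.extP (I.iv URI.rng) → p ∈ I.ΔP ∧ c ∈ I.ΔC
  typII4 : ∀ x c, (x, c) ∈ I.extP (I.iv URI.typ) → c ∈ I.ΔC

/-- ρdf entailment. -/
def Entails (G H : Graph) : Prop := ∀ I : Interp, Models I G → Models I H

/-! ### The ρdf deductive system -/

/-- Instantiations of the ρdf deductive rules (2)-(5): premises / conclusion. -/
inductive RuleInst : Finset Triple → Triple → Prop where
  | sp_trans (a b c : Term) :
      RuleInst {⟨a, URI.sp, b⟩, ⟨b, URI.sp, c⟩} ⟨a, URI.sp, c⟩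
  | sp_mono (d e : URI) (x y : Term) :
      RuleInst {⟨Term.uri d, URI.sp, Term.uri e⟩, ⟨x, d, y⟩} ⟨x, e, y⟩
  | sc_trans (a b c : Term) :
      RuleInst {⟨a, URI.sc, b⟩, ⟨b, URI.sc, c⟩} ⟨a, URI.sc, c⟩
  | sc_mono (a b x : Term) :
      RuleInst {⟨a, URI.sc, b⟩, ⟨x, URI.typ, a⟩} ⟨x, URI.typ, b⟩
  | dom (d : URI) (b x y : Term) :
      RuleInst {⟨Term.uri d, URI.dom, b⟩, ⟨x, d, y⟩} ⟨x, URI.typ, b⟩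
  | rng (d : URI) (b x y : Term) :
      RuleInst {⟨Term.uri d, URI.rng, b⟩, ⟨x, d, y⟩} ⟨y, URI.typ, b⟩
  | idom (a b x y : Term) (d : URI) :
      RuleInst {⟨a, URI.dom, b⟩, ⟨Term.uri d, URI.sp, a⟩, ⟨x, d, y⟩} ⟨x, URI.typ, b⟩
  | irng (a b x y : Term) (d : URI) :
      RuleInst {⟨a, URI.rng, b⟩, ⟨Term.uri d, URI.sp, a⟩, ⟨x, d, y⟩} ⟨y, URI.typ, b⟩

/-- The ρdf rules without the implicit typing rules (5a), (5b). -/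
inductive RuleInstCore : Finset Triple → Triple → Prop where
  | sp_trans (a b c : Term) :
      RuleInstCore {⟨a, URI.sp, b⟩, ⟨b, URI.sp, c⟩} ⟨a, URI.sp, c⟩
  | sp_mono (d e : URI) (x y : Term) :
      RuleInstCore {⟨Term.uri d, URI.sp, Term.uri e⟩, ⟨x, d, y⟩} ⟨x, e, y⟩
  | sc_trans (a b c : Term) :
      RuleInstCore {⟨a, URI.sc, b⟩, ⟨b, URI.sc, c⟩} ⟨a, URI.sc, c⟩
  | sc_mono (a b x : Term) :
      RuleInstCore {⟨a, URI.sc, b⟩, ⟨x, URI.typ, a⟩} ⟨x, URI.typ, b⟩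
  | dom (d : URI) (b x y : Term) :
      RuleInstCore {⟨Term.uri d, URI.dom, b⟩, ⟨x, d, y⟩} ⟨x, URI.typ, b⟩
  | rng (d : URI) (b x y : Term) :
      RuleInstCore {⟨Term.uri d, URI.rng, b⟩, ⟨x, d, y⟩} ⟨y, URI.typ, b⟩

/-- The additional deductive rules of ρdf⊥¬. -/
inductive ExtraRule : Finset Triple → Triple → Prop where
  -- (2c)
  | sp_neg (a b : Bool) (m n : ℕ) :
      ExtraRule {⟨Term.uri (URI.res a m), URI.sp, Term.uri (URI.res b n)⟩}
        ⟨Term.uri (URI.res (!b) n), URI.sp, Term.uri (URI.res (!a) m)⟩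
  -- (2d)
  | sp_star_o (x : Term) (d e : URI) (cb : Bool) (cn : ℕ) :
      ExtraRule {⟨x, d, Term.uri (URI.star cb cn)⟩, ⟨Term.uri d, URI.sp, Term.uri e⟩}
        ⟨x, e, Term.uri (URI.star cb cn)⟩
  -- (2e)
  | sp_star_s (x : Term) (d e : URI) (cb : Bool) (cn : ℕ) :
      ExtraRule {⟨Term.uri (URI.star cb cn), d, x⟩, ⟨Term.uri d, URI.sp, Term.uri e⟩}
        ⟨Term.uri (URI.star cb cn), e, x⟩
  -- (3c)
  | sc_neg (a b : Bool) (m n : ℕ) :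
      ExtraRule {⟨Term.uri (URI.res a m), URI.sc, Term.uri (URI.res b n)⟩}
        ⟨Term.uri (URI.res (!b) n), URI.sc, Term.uri (URI.res (!a) m)⟩
  -- (3d)
  | sc_star_o (a : Term) (d : URI) (bb cb : Bool) (bn cn : ℕ) :
      ExtraRule {⟨a, d, Term.uri (URI.star cb cn)⟩,
                 ⟨Term.uri (URI.res bb bn), URI.sc, Term.uri (URI.res cb cn)⟩}
        ⟨a, d, Term.uri (URI.star bb bn)⟩
  -- (3e)
  | sc_star_s (a : Term) (d : URI) (bb cb : Bool) (bn cn : ℕ) :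
      ExtraRule {⟨Term.uri (URI.star cb cn), d, a⟩,
                 ⟨Term.uri (URI.res bb bn), URI.sc, Term.uri (URI.res cb cn)⟩}
        ⟨Term.uri (URI.star bb bn), d, a⟩
  -- (4c)
  | dom_neg (db bb : Bool) (dn bn : ℕ) (x z y : Term) :
      ExtraRule {⟨Term.uri (URI.res db dn), URI.dom, Term.uri (URI.res bb bn)⟩,
                 ⟨x, URI.typ, Term.uri (URI.res (!bb) bn)⟩,
                 ⟨z, URI.res db dn, y⟩}
        ⟨x, URI.res (!db) dn, y⟩
  -- (4d)
  | rng_neg (db bb : Bool) (dn bn : ℕ) (x z y : Term) :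
      ExtraRule {⟨Term.uri (URI.res db dn), URI.rng, Term.uri (URI.res bb bn)⟩,
                 ⟨y, URI.typ, Term.uri (URI.res (!bb) bn)⟩,
                 ⟨x, URI.res db dn, z⟩}
        ⟨x, URI.res (!db) dn, y⟩
  -- (4e)
  | star_inst_o (a y : Term) (d : URI) (cb : Bool) (cn : ℕ) :
      ExtraRule {⟨a, d, Term.uri (URI.star cb cn)⟩, ⟨y, URI.typ, Term.uri (URI.res cb cn)⟩}
        ⟨a, d, y⟩
  -- (4f)
  | star_inst_s (b x : Term) (d : URI) (cb : Bool) (cn : ℕ) :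
      ExtraRule {⟨Term.uri (URI.star cb cn), d, b⟩, ⟨x, URI.typ, Term.uri (URI.res cb cn)⟩}
        ⟨x, d, b⟩
  -- (4g)
  | star_conflict_o (a y : Term) (db cb : Bool) (dn cn : ℕ) :
      ExtraRule {⟨a, URI.res db dn, Term.uri (URI.star cb cn)⟩, ⟨a, URI.res (!db) dn, y⟩}
        ⟨y, URI.typ, Term.uri (URI.res (!cb) cn)⟩
  -- (4h)
  | star_conflict_s (b x : Term) (db cb : Bool) (dn cn : ℕ) :
      ExtraRule {⟨Term.uri (URI.star cb cn), URI.res db dn, b⟩, ⟨x, URI.res (!db) dn, b⟩}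
        ⟨x, URI.typ, Term.uri (URI.res (!cb) cn)⟩
  -- (6a)
  | botc_symm (a b : Term) : ExtraRule {⟨a, URI.botc, b⟩} ⟨b, URI.botc, a⟩
  -- (6b)
  | botc_subtrans (a b c : Term) :
      ExtraRule {⟨a, URI.botc, b⟩, ⟨c, URI.sc, a⟩} ⟨c, URI.botc, b⟩
  -- (6c)
  | botc_exh (a b : Term) : ExtraRule {⟨a, URI.botc, a⟩} ⟨a, URI.botc, b⟩
  -- (6d)
  | botc_sc (a : Term) (b : Bool) (n : ℕ) :
      ExtraRule {⟨a, URI.botc, Term.uri (URI.res b n)⟩} ⟨a, URI.sc, Term.uri (URI.res (!b) n)⟩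
  -- (6e)
  | sc_botc (a : Term) (b : Bool) (n : ℕ) :
      ExtraRule {⟨a, URI.sc, Term.uri (URI.res b n)⟩} ⟨a, URI.botc, Term.uri (URI.res (!b) n)⟩
  -- (7a)
  | botp_symm (a b : Term) : ExtraRule {⟨a, URI.botp, b⟩} ⟨b, URI.botp, a⟩
  -- (7b)
  | botp_subtrans (a b c : Term) :
      ExtraRule {⟨a, URI.botp, b⟩, ⟨c, URI.sp, a⟩} ⟨c, URI.botp, b⟩
  -- (7c)
  | botp_exh (a b : Term) : ExtraRule {⟨a, URI.botp, a⟩} ⟨a, URI.botp, b⟩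
  -- (7d)
  | botp_sp (a : Term) (b : Bool) (n : ℕ) :
      ExtraRule {⟨a, URI.botp, Term.uri (URI.res b n)⟩} ⟨a, URI.sp, Term.uri (URI.res (!b) n)⟩
  -- (7e)
  | sp_botp (a : Term) (b : Bool) (n : ℕ) :
      ExtraRule {⟨a, URI.sp, Term.uri (URI.res b n)⟩} ⟨a, URI.botp, Term.uri (URI.res (!b) n)⟩
  -- (8a)
  | cross_dom (a b c d : Term) :
      ExtraRule {⟨a, URI.dom, c⟩, ⟨b, URI.dom, d⟩, ⟨c, URI.botc, d⟩} ⟨a, URI.botp, b⟩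
  -- (8b)
  | cross_rng (a b c d : Term) :
      ExtraRule {⟨a, URI.rng, c⟩, ⟨b, URI.rng, d⟩, ⟨c, URI.botc, d⟩} ⟨a, URI.botp, b⟩

/-- All ρdf⊥¬ deductive rules: the ρdf rules plus the additional rules. -/
def RuleInstN (R : Finset Triple) (τ : Triple) : Prop := RuleInst R τ ∨ ExtraRule R τ

/-- The ρdf⊥¬ rules without the implicit typing rules (5a), (5b). -/
def RuleInstNCore (R : Finset Triple) (τ : Triple) : Prop := RuleInstCore R τ ∨ ExtraRule R τ

/-- One derivation step (including the map rule (1a)). -/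
inductive Step (rules : Finset Triple → Triple → Prop) (ok : Triple → Prop) :
    Graph → Graph → Prop where
  | map {G G' : Graph} (μ : Term → Term) (hμ : IsMap μ) (h : mapG μ G' ⊆ G) :
      Step rules ok G G'
  | sub {G G' : Graph} (h : G' ⊆ G) : Step rules ok G G'
  | rule {G : Graph} (R : Finset Triple) (τ : Triple)
      (hR : R ⊆ G) (hr : rules R τ) (hok : ok τ) : Step rules ok G (insert τ G)

/-- One derivation step without the map rule (1a). -/
inductive StepNM (rules : Finset Triple → Triple → Prop) (ok : Triple → Prop) :
    Graph → Graph → Prop where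
  | sub {G G' : Graph} (h : G' ⊆ G) : StepNM rules ok G G'
  | rule {G : Graph} (R : Finset Triple) (τ : Triple)
      (hR : R ⊆ G) (hr : rules R τ) (hok : ok τ) : StepNM rules ok G (insert τ G)

/-- Derivability (a proof is a finite sequence of graphs related by steps). -/
def Deriv (rules : Finset Triple → Triple → Prop) (ok : Triple → Prop) :
    Graph → Graph → Prop := Relation.ReflTransGen (Step rules ok)

/-- Derivability without the map rule (1a). -/
def DerivNM (rules : Finset Triple → Triple → Prop) (ok : Triple → Prop) :
    Graph → Graph → Prop := Relation.ReflTransGen (StepNM rules ok)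

/-- The closure: all triples derivable without rule (1a). -/
def Closure (rules : Finset Triple → Triple → Prop) (ok : Triple → Prop) (G : Graph) :
    Set Triple := {τ | ∃ H : Graph, DerivNM rules ok G H ∧ τ ∈ H}

/-- ρdf derivability `G ⊢ H`. -/
def DerivRdf : Graph → Graph → Prop := Deriv RuleInst Triple.okRdf

/-- ρdf closure `Cl(G)`. -/
def Cl : Graph → Set Triple := Closure RuleInst Triple.okRdf

/-- ρdf closure computed without the implicit typing rules (5). -/
def ClCore : Graph → Set Triple := Closure RuleInstCore Triple.okRdf

/-- ρdf⊥¬ derivability `G ⊢⊥¬ H`. -/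
def DerivN : Graph → Graph → Prop := Deriv RuleInstN Triple.okN

/-- ρdf⊥¬ closure `Cl⊥¬(G)`. -/
def ClN : Graph → Set Triple := Closure RuleInstN Triple.okN

/-- ρdf⊥¬ closure computed without the implicit typing rules (5). -/
def ClNCore : Graph → Set Triple := Closure RuleInstNCore Triple.okN

/-- `S` is closed under the given rules. -/
def ClosedUnder (rules : Finset Triple → Triple → Prop) (ok : Triple → Prop)
    (S : Set Triple) : Prop :=
  ∀ R τ, rules R τ → ok τ → ↑R ⊆ S → τ ∈ S

/-! ### ρdf⊥¬ semantics -/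

/-- A ρdf⊥¬ interpretation (raw data). -/
structure InterpN : Type where
  ΔR : Set Term
  ΔP : Set Term
  ΔC : Set Term
  ΔL : Set Term
  compl : Term → Term
  extPp : Term → Set (Term × Term)
  extPn : Term → Set (Term × Term)
  extCp : Term → Set Term
  extCn : Term → Set Term
  int : Term → Term

def InterpN.iv (I : InterpN) (e : URI) : Term := I.int (Term.uri e)

/-- `I` is a ρdf⊥¬ interpretation over the vocabulary `V`. -/
structure IsInterpN (I : InterpN) (V : Set Term) : Prop where
  finR : I.ΔR.Finite
  neR : I.ΔR.Nonempty
  finP : I.ΔP.Finite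
  neP : I.ΔP.Nonempty
  finC : I.ΔC.Finite
  neC : I.ΔC.Nonempty
  finL : I.ΔL.Finite
  neL : I.ΔL.Nonempty
  hCR : I.ΔC ⊆ I.ΔR
  hLR : I.ΔL ⊆ I.ΔR
  complR : ∀ t ∈ I.ΔR, I.compl t ∈ I.ΔR
  complP : ∀ t ∈ I.ΔP, I.compl t ∈ I.ΔP
  complC : ∀ t ∈ I.ΔC, I.compl t ∈ I.ΔC
  complInvol : ∀ t ∈ I.ΔR ∪ I.ΔP ∪ I.ΔC, I.compl (I.compl t) = t
  hlit : ∀ n, Term.lit n ∈ V → Term.lit n ∈ I.ΔL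
  hPneg : ∀ p ∈ I.ΔP, I.extPp (I.compl p) = I.extPn p
  hCneg : ∀ c ∈ I.ΔC, I.extCp (I.compl c) = I.extCn c
  hextPp : ∀ p ∈ I.ΔP, I.extPp p ⊆ I.ΔR ×ˢ I.ΔR
  hextPn : ∀ p ∈ I.ΔP, I.extPn p ⊆ I.ΔR ×ˢ I.ΔR
  hextCp : ∀ c ∈ I.ΔC, I.extCp c ⊆ I.ΔR
  hextCn : ∀ c ∈ I.ΔC, I.extCn c ⊆ I.ΔR
  hint : ∀ t ∈ V, ¬ t.isBlank → ¬ t.isStar → I.int t ∈ I.ΔR ∪ I.ΔP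
  hintneg : ∀ (b : Bool) (n : ℕ),
    I.int (Term.uri (URI.res (!b) n)) = I.compl (I.int (Term.uri (URI.res b n)))
  hintlit : ∀ n, I.int (Term.lit n) = Term.lit n
  hintblank : ∀ n, I.int (Term.blank n) ∈ I.ΔR

/-- `I` is a ρdf⊥¬-model of the graph `G`. -/
structure ModelsN (I : InterpN) (G : Graph) : Prop where
  interp : IsInterpN I (botVocT ∪ uni G)
  -- Simple
  simple1 : ∀ τ ∈ G, ¬ τ.s.isStar → ¬ τ.o.isStar →
    I.iv τ.p ∈ I.ΔP ∧ (I.int τ.s, I.int τ.o) ∈ I.extPp (I.iv τ.p)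
  simple2 : ∀ τ ∈ G, ∀ (b : Bool) (n : ℕ), τ.o = Term.uri (URI.star b n) →
    I.iv τ.p ∈ I.ΔP ∧ I.int (Term.uri (URI.res b n)) ∈ I.ΔC ∧
    ∀ y ∈ I.extCp (I.int (Term.uri (URI.res b n))), (I.int τ.s, y) ∈ I.extPp (I.iv τ.p)
  simple3 : ∀ τ ∈ G, ∀ (b : Bool) (n : ℕ), τ.s = Term.uri (URI.star b n) →
    I.iv τ.p ∈ I.ΔP ∧ I.int (Term.uri (URI.res b n)) ∈ I.ΔC ∧
    ∀ x ∈ I.extCp (I.int (Term.uri (URI.res b n))), (x, I.int τ.o) ∈ I.extPp (I.iv τ.p)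
  simple4 : ∀ τ ∈ G, ∀ (b : Bool) (n : ℕ), τ.o = Term.uri (URI.star b n) →
    I.iv τ.p ∈ I.ΔP ∧ I.int (Term.uri (URI.res b n)) ∈ I.ΔC ∧
    ∀ y, (I.int τ.s, y) ∈ I.extPn (I.iv τ.p) → y ∈ I.extCn (I.int (Term.uri (URI.res b n)))
  simple5 : ∀ τ ∈ G, ∀ (b : Bool) (n : ℕ), τ.s = Term.uri (URI.star b n) →
    I.iv τ.p ∈ I.ΔP ∧ I.int (Term.uri (URI.res b n)) ∈ I.ΔC ∧
    ∀ x, (x, I.int τ.o) ∈ I.extPn (I.iv τ.p) → x ∈ I.extCn (I.int (Term.uri (URI.res b n)))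
  -- Subproperty
  sp_trans : ∀ p q r, p ∈ I.ΔP → q ∈ I.ΔP → r ∈ I.ΔP →
    (p, q) ∈ I.extPp (I.iv URI.sp) → (q, r) ∈ I.extPp (I.iv URI.sp) →
    (p, r) ∈ I.extPp (I.iv URI.sp)
  sp_sub : ∀ p q, (p, q) ∈ I.extPp (I.iv URI.sp) →
    p ∈ I.ΔP ∧ q ∈ I.ΔP ∧ I.extPp p ⊆ I.extPp q
  sp_contra : ∀ p q, p ∈ I.ΔP → q ∈ I.ΔP →
    ((p, q) ∈ I.extPp (I.iv URI.sp) ↔ (I.compl q, I.compl p) ∈ I.extPp (I.iv URI.sp))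
  -- Subclass
  sc_trans : ∀ c d e, c ∈ I.ΔC → d ∈ I.ΔC → e ∈ I.ΔC →
    (c, d) ∈ I.extPp (I.iv URI.sc) → (d, e) ∈ I.extPp (I.iv URI.sc) →
    (c, e) ∈ I.extPp (I.iv URI.sc)
  sc_sub : ∀ c d, (c, d) ∈ I.extPp (I.iv URI.sc) →
    c ∈ I.ΔC ∧ d ∈ I.ΔC ∧ I.extCp c ⊆ I.extCp d
  sc_contra : ∀ c d, c ∈ I.ΔC → d ∈ I.ΔC →
    ((c, d) ∈ I.extPp (I.iv URI.sc) ↔ (I.compl d, I.compl c) ∈ I.extPp (I.iv URI.sc))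
  -- Typing I
  typI1 : ∀ x c, c ∈ I.ΔC → (x ∈ I.extCp c ↔ (x, c) ∈ I.extPp (I.iv URI.typ))
  typI2 : ∀ p c x y, (p, c) ∈ I.extPp (I.iv URI.dom) → (x, y) ∈ I.extPp p → x ∈ I.extCp c
  typI3 : ∀ p c x y, (p, c) ∈ I.extPp (I.iv URI.rng) → (x, y) ∈ I.extPp p → y ∈ I.extCp c
  typI4 : ∀ p c x y, (p, c) ∈ I.extPp (I.iv URI.dom) → x ∈ I.extCn c →
    (∃ x', (x', y) ∈ I.extPp p) → (x, y) ∈ I.extPn p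
  typI5 : ∀ p c x y, (p, c) ∈ I.extPp (I.iv URI.rng) → y ∈ I.extCn c →
    (∃ y', (x, y') ∈ I.extPp p) → (x, y) ∈ I.extPn p
  -- Typing II
  typII1 : ∀ e ∈ botVoc, I.iv e ∈ I.ΔP
  typII2 : ∀ p c, (p, c) ∈ I.extPp (I.iv URI.dom) → p ∈ I.ΔP ∧ c ∈ I.ΔC
  typII3 : ∀ p c, (p, c) ∈ I.extPp (I.iv URI.rng) → p ∈ I.ΔP ∧ c ∈ I.ΔC
  typII4 : ∀ x c, (x, c) ∈ I.extPp (I.iv URI.typ) → c ∈ I.ΔC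
  -- Disjointness I
  disjI1 : ∀ c d, (c, d) ∈ I.extPp (I.iv URI.botc) → c ∈ I.ΔC ∧ d ∈ I.ΔC
  disjI2 : ∀ p q, (p, q) ∈ I.extPp (I.iv URI.botp) → p ∈ I.ΔP ∧ q ∈ I.ΔP
  disjI3_symm : ∀ c d, (c, d) ∈ I.extPp (I.iv URI.botc) → (d, c) ∈ I.extPp (I.iv URI.botc)
  disjI3_subtrans : ∀ c d e, (c, d) ∈ I.extPp (I.iv URI.botc) →
    (e, c) ∈ I.extPp (I.iv URI.sc) → (e, d) ∈ I.extPp (I.iv URI.botc)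
  disjI3_exh : ∀ c d, (c, c) ∈ I.extPp (I.iv URI.botc) → d ∈ I.ΔC →
    (c, d) ∈ I.extPp (I.iv URI.botc)
  disjI4_symm : ∀ p q, (p, q) ∈ I.extPp (I.iv URI.botp) → (q, p) ∈ I.extPp (I.iv URI.botp)
  disjI4_subtrans : ∀ p q r, (p, q) ∈ I.extPp (I.iv URI.botp) →
    (r, p) ∈ I.extPp (I.iv URI.sp) → (r, q) ∈ I.extPp (I.iv URI.botp)
  disjI4_exh : ∀ p q, (p, p) ∈ I.extPp (I.iv URI.botp) → q ∈ I.ΔP →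
    (p, q) ∈ I.extPp (I.iv URI.botp)
  -- Disjointness II
  disjII1 : ∀ p q c d, (p, c) ∈ I.extPp (I.iv URI.dom) → (q, d) ∈ I.extPp (I.iv URI.dom) →
    (c, d) ∈ I.extPp (I.iv URI.botc) → (p, q) ∈ I.extPp (I.iv URI.botp)
  disjII2 : ∀ p q c d, (p, c) ∈ I.extPp (I.iv URI.rng) → (q, d) ∈ I.extPp (I.iv URI.rng) →
    (c, d) ∈ I.extPp (I.iv URI.botc) → (p, q) ∈ I.extPp (I.iv URI.botp)
  disjII3 : ∀ c d, c ∈ I.ΔC → d ∈ I.ΔC →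
    ((c, d) ∈ I.extPp (I.iv URI.botc) ↔ (c, I.compl d) ∈ I.extPp (I.iv URI.sc))
  disjII4 : ∀ p q, p ∈ I.ΔP → q ∈ I.ΔP →
    ((p, q) ∈ I.extPp (I.iv URI.botp) ↔ (p, I.compl q) ∈ I.extPp (I.iv URI.sp))

/-- ρdf⊥¬ entailment `G ⊨⊥¬ H`. -/
def EntailsN (G H : Graph) : Prop := ∀ I : InterpN, ModelsN I G → ModelsN I H

/-! ### The canonical model of a ρdf⊥¬ graph -/

def canDR (G : Graph) : Set Term := uni G ∪ negT '' uni G ∪ rhoVocT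

def canDP' (G : Graph) : Set Term :=
  {p | p ∈ uni G ∧ ∃ τ ∈ ClN G,
      Term.uri τ.p = p ∨
      ((τ.p = URI.sp ∨ τ.p = URI.botp) ∧ (τ.s = p ∨ τ.o = p)) ∨
      ((τ.p = URI.dom ∨ τ.p = URI.rng) ∧ τ.s = p)}
    ∪ botVocT

def canDP (G : Graph) : Set Term := canDP' G ∪ negT '' canDP' G

def canDC' (G : Graph) : Set Term :=
  {c | c ∈ uni G ∧ ∃ τ ∈ ClN G,
      (τ.p = URI.typ ∧ τ.o = c) ∨
      ((τ.p = URI.sc ∨ τ.p = URI.botc) ∧ (τ.s = c ∨ τ.o = c)) ∨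
      ((τ.p = URI.dom ∨ τ.p = URI.rng) ∧ τ.o = c) ∨
      (∃ (b : Bool) (n : ℕ),
        (τ.s = Term.uri (URI.star b n) ∨ τ.o = Term.uri (URI.star b n)) ∧
        c = Term.uri (URI.res b n))}

def canDC (G : Graph) : Set Term := canDC' G ∪ negT '' canDC' G

def canDL (G : Graph) : Set Term := {t | t ∈ uni G ∧ t.isLit}

def canExtP (G : Graph) (p : Term) : Set (Term × Term) :=
  {x | ∃ u : URI, p = Term.uri u ∧ (⟨x.1, u, x.2⟩ : Triple) ∈ ClN G}

def canExtC (G : Graph) (c : Term) : Set Term :=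
  {x | x ∈ uni G ∧ (⟨x, URI.typ, c⟩ : Triple) ∈ ClN G}

/-- The canonical interpretation `I_G` of a ρdf⊥¬ graph `G`. -/
def canInterp (G : Graph) : InterpN where
  ΔR := canDR G
  ΔP := canDP G
  ΔC := canDC G
  ΔL := canDL G
  compl := negT
  extPp := canExtP G
  extPn := fun p => canExtP G (negT p)
  extCp := canExtC G
  extCn := fun c => canExtC G (negT c)
  int := id

end Rho
namespace Rho

/-!
The canonical interpretation of `G` reads every property extension off the closure `Cl G`
(the triples derivable without the map rule), each property also absorbing the extensions of
its derived subproperties; the rules (2)–(5) are exactly what makes it a model of `G`.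
If `G ⊨ H` it is therefore a model of `H`, and its interpretation of terms, which is the
identity except on blank nodes foreign to `G`, is a map `μ` with `μ(H) ⊆ Cl G`. Finitely
many triples of the closure occur together in one derivation, so `μ(H)` lies in a graph
derivable from `G` without (1a), and a single final map step yields `H`.
-/

section Derivations

variable {rules : Finset Triple → Triple → Prop} {ok : Triple → Prop}

theorem DerivNM.union_right {G H : Graph} (X : Graph) (h : DerivNM rules ok G H) :
    DerivNM rules ok (G ∪ X) (H ∪ X) := by
  induction h with
  | refl => exact .refl
  | tail _ hstep ih =>
    refine ih.tail ?_
    cases hstep with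
    | sub hsub => exact .sub (Finset.union_subset_union_left hsub)
    | rule R τ hR hr hok =>
      rw [Finset.insert_union]
      exact .rule R τ (hR.trans Finset.subset_union_left) hr hok

theorem subset_closure {G : Graph} : ↑G ⊆ Closure rules ok G :=
  fun _ hτ => ⟨G, .refl, hτ⟩

theorem exists_derivNM_of_subset_closure (G S : Graph) (hS : ↑S ⊆ Closure rules ok G) :
    ∃ K : Graph, DerivNM rules ok G K ∧ G ⊆ K ∧ S ⊆ K := by
  induction S using Finset.induction_on with
  | empty => exact ⟨G, .refl, subset_rfl, Finset.empty_subset _⟩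
  | insert τ S _ ih =>
    rw [Finset.coe_insert, Set.insert_subset_iff] at hS
    obtain ⟨K, hGK, hG_K, hSK⟩ := ih hS.2
    obtain ⟨L, hGL, hτL⟩ := hS.1
    have hKLK : DerivNM rules ok K (L ∪ K) := by
      simpa [Finset.union_eq_right.mpr hG_K] using hGL.union_right K
    refine ⟨L ∪ K, hGK.trans hKLK, hG_K.trans Finset.subset_union_right, ?_⟩
    exact Finset.insert_subset (Finset.mem_union_left _ hτL)
      (hSK.trans Finset.subset_union_right)

theorem mem_closure_of_rule {G : Graph} {R : Finset Triple} {τ : Triple}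
    (hR : ↑R ⊆ Closure rules ok G) (hr : rules R τ) (hok : ok τ) :
    τ ∈ Closure rules ok G := by
  obtain ⟨K, hGK, -, hRK⟩ := exists_derivNM_of_subset_closure G R hR
  exact ⟨insert τ K, hGK.tail (.rule R τ hRK hr hok), Finset.mem_insert_self _ _⟩

end Derivations

theorem DerivNM.isRdfGraph {rules : Finset Triple → Triple → Prop} {G H : Graph}
    (hG : IsRdfGraph G) (hd : DerivNM rules Triple.okRdf G H) : IsRdfGraph H := by
  induction hd with
  | refl => exact hG
  | tail _ hstep ih =>
    cases hstep with
    | sub hsub => exact fun σ hσ => ih σ (hsub hσ)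
    | rule R σ _ _ hok => exact Finset.forall_mem_insert _ _ _ |>.mpr ⟨hok, ih⟩

theorem okRdf_of_mem_cl {G : Graph} (hG : IsRdfGraph G) {τ : Triple} (h : τ ∈ Cl G) :
    τ.okRdf := by
  obtain ⟨H, hd, hτ⟩ := h
  exact hd.isRdfGraph hG τ hτ

theorem RuleInst.okRdf {R : Finset Triple} {τ : Triple} (hr : RuleInst R τ)
    (hR : ∀ σ ∈ R, σ.okRdf) : τ.okRdf := by
  cases hr <;> simp_all [Triple.okRdf]

theorem mem_cl_of_ruleInst {G : Graph} (hG : IsRdfGraph G) {R : Finset Triple} {τ : Triple}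
    (hr : RuleInst R τ) (hR : ∀ σ ∈ R, σ ∈ Cl G) : τ ∈ Cl G :=
  mem_closure_of_rule hR hr (hr.okRdf fun σ hσ => okRdf_of_mem_cl hG (hR σ hσ))

theorem mem_uni_s {G : Graph} {τ : Triple} (h : τ ∈ G) : τ.s ∈ uni G :=
  ⟨τ, h, Or.inl rfl⟩

theorem mem_uni_p {G : Graph} {τ : Triple} (h : τ ∈ G) : Term.uri τ.p ∈ uni G :=
  ⟨τ, h, Or.inr (Or.inl rfl)⟩

theorem mem_uni_o {G : Graph} {τ : Triple} (h : τ ∈ G) : τ.o ∈ uni G :=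
  ⟨τ, h, Or.inr (Or.inr rfl)⟩

theorem uni_mono {G G' : Graph} (h : G' ⊆ G) : uni G' ⊆ uni G := by
  rintro t ⟨τ, hτ, ht⟩
  exact ⟨τ, h hτ, ht⟩

theorem uni_finite (G : Graph) : (uni G).Finite := by
  refine (G.finite_toSet.biUnion fun τ _ =>
    ({τ.s, Term.uri τ.p, τ.o} : Set Term).toFinite).subset ?_
  rintro t ⟨τ, hτ, ht⟩
  exact Set.mem_biUnion hτ (by rcases ht with rfl | rfl | rfl <;> simp)

theorem rhoVocT_finite : rhoVocT.Finite :=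
  (Set.toFinite {URI.sp, URI.sc, URI.typ, URI.dom, URI.rng}).image _

theorem RuleInst.conclusion_mem_uni {R : Finset Triple} {τ : Triple} (hr : RuleInst R τ) :
    τ.s ∈ uni R ∧ Term.uri τ.p ∈ uni R ∪ rhoVocT ∧ τ.o ∈ uni R := by
  cases hr <;> simp [uni, rhoVocT, rhoVoc]

theorem DerivNM.uni_subset {G H : Graph} (hd : DerivNM RuleInst Triple.okRdf G H) :
    uni H ⊆ uni G ∪ rhoVocT := by
  induction hd with
  | refl => exact Set.subset_union_left
  | tail _ hstep ih =>
    cases hstep with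
    | sub hsub => exact (uni_mono hsub).trans ih
    | rule R σ hR hr _ =>
      rintro t ⟨ρ, hρ, ht⟩
      rcases Finset.mem_insert.mp hρ with rfl | hρ
      · obtain ⟨hs, hp, ho⟩ := hr.conclusion_mem_uni
        have hRG : uni R ∪ rhoVocT ⊆ uni G ∪ rhoVocT :=
          Set.union_subset ((uni_mono hR).trans ih) Set.subset_union_right
        rcases ht with rfl | rfl | rfl
        · exact hRG (Or.inl hs)
        · exact hRG hp
        · exact hRG (Or.inl ho)
      · exact ih ⟨ρ, hρ, ht⟩

def canDom (G : Graph) : Set Term := uni G ∪ rhoVocT ∪ {Term.lit 0}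

theorem canDom_finite (G : Graph) : (canDom G).Finite :=
  ((uni_finite G).union rhoVocT_finite).union (Set.finite_singleton _)

theorem canDom_nonempty (G : Graph) : (canDom G).Nonempty :=
  ⟨Term.lit 0, Or.inr rfl⟩

theorem mem_canDom_of_mem_cl {G : Graph} {τ : Triple} (h : τ ∈ Cl G) :
    τ.s ∈ canDom G ∧ Term.uri τ.p ∈ canDom G ∧ τ.o ∈ canDom G := by
  obtain ⟨H, hd, hτ⟩ := h
  exact ⟨Or.inl (hd.uni_subset (mem_uni_s hτ)), Or.inl (hd.uni_subset (mem_uni_p hτ)),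
    Or.inl (hd.uni_subset (mem_uni_o hτ))⟩

open Classical in
/-- Blank nodes not occurring in `G` are sent to `lit 0`, keeping the resource domain finite. -/
noncomputable def canI (G : Graph) : Interp where
  ΔR := canDom G
  ΔP := canDom G
  ΔC := canDom G
  ΔL := canDom G
  extP := fun p => {x | ∃ u : URI,
    (p = Term.uri u ∨ (⟨Term.uri u, URI.sp, p⟩ : Triple) ∈ Cl G) ∧
    (⟨x.1, u, x.2⟩ : Triple) ∈ Cl G}
  extC := fun c => {x | (⟨x, URI.typ, c⟩ : Triple) ∈ Cl G}
  int := fun t => match t with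
    | Term.blank n => if Term.blank n ∈ uni G then Term.blank n else Term.lit 0
    | t => t

theorem canI_iv (G : Graph) (u : URI) : (canI G).iv u = Term.uri u := rfl

theorem canI_isMap (G : Graph) : IsMap (canI G).int :=
  ⟨fun _ => rfl, fun _ => rfl⟩

theorem canI_int_of_not_isBlank (G : Graph) {t : Term} (h : ¬ t.isBlank) :
    (canI G).int t = t := by
  cases t with
  | blank => exact absurd trivial h
  | _ => rfl

theorem canI_int_of_mem_uni {G : Graph} {t : Term} (h : t ∈ uni G) : (canI G).int t = t := by
  cases t with
  | blank => simp only [canI]; rw [if_pos h]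
  | _ => rfl

theorem canI_int_blank_mem_canDom (G : Graph) (n : ℕ) :
    (canI G).int (Term.blank n) ∈ canDom G := by
  simp only [canI]
  split_ifs with h
  exacts [Or.inl (Or.inl h), Or.inr rfl]

theorem mem_canI_extC {G : Graph} {c x : Term} :
    x ∈ (canI G).extC c ↔ (⟨x, URI.typ, c⟩ : Triple) ∈ Cl G := Iff.rfl

theorem canI_extP_uri {G : Graph} (hG : IsRdfGraph G) {v : URI} {x y : Term} :
    (x, y) ∈ (canI G).extP (Term.uri v) ↔ (⟨x, v, y⟩ : Triple) ∈ Cl G := by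
  refine ⟨?_, fun h => ⟨v, Or.inl rfl, h⟩⟩
  rintro ⟨u, hvu | huv, hxy⟩
  · cases hvu
    exact hxy
  · exact mem_cl_of_ruleInst hG (.sp_mono u v x y) (by simp [huv, hxy])

theorem canI_isInterp (G : Graph) : IsInterp (canI G) (rhoVocT ∪ uni G) where
  finR := canDom_finite G
  neR := canDom_nonempty G
  finP := canDom_finite G
  neP := canDom_nonempty G
  finC := canDom_finite G
  neC := canDom_nonempty G
  finL := canDom_finite G
  neL := canDom_nonempty G
  hCR := subset_rfl
  hLR := subset_rfl
  hlit n hn := by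
    rcases hn with ⟨u, -, hu⟩ | hn
    · cases hu
    · exact Or.inl (Or.inl hn)
  hextP _ _ := fun ⟨_, _⟩ ⟨_, _, hxy⟩ =>
    ⟨(mem_canDom_of_mem_cl hxy).1, (mem_canDom_of_mem_cl hxy).2.2⟩
  hextC _ _ _ hx := (mem_canDom_of_mem_cl hx).1
  hint t ht hb := by
    rw [canI_int_of_not_isBlank G hb]
    exact Or.inl (ht.elim (fun h => Or.inl (Or.inr h)) (fun h => Or.inl (Or.inl h)))
  hintlit _ := rfl
  hintblank := canI_int_blank_mem_canDom G

theorem canI_extP_subset_of_sp {G : Graph} (hG : IsRdfGraph G) {p q : Term}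
    (hpq : (⟨p, URI.sp, q⟩ : Triple) ∈ Cl G) : (canI G).extP p ⊆ (canI G).extP q := by
  rintro ⟨x, y⟩ ⟨u, hup | hup, hxy⟩
  · exact ⟨u, Or.inr (hup ▸ hpq), hxy⟩
  · exact ⟨u, Or.inr (mem_cl_of_ruleInst hG (.sp_trans _ p q) (by simp [hup, hpq])), hxy⟩

theorem typ_mem_cl_of_dom {G : Graph} (hG : IsRdfGraph G) {p c x y : Term}
    (hpc : (⟨p, URI.dom, c⟩ : Triple) ∈ Cl G) (hxy : (x, y) ∈ (canI G).extP p) :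
    (⟨x, URI.typ, c⟩ : Triple) ∈ Cl G := by
  obtain ⟨u, rfl | hup, hxy⟩ := hxy
  · exact mem_cl_of_ruleInst hG (.dom u c x y) (by simp [hpc, hxy])
  · exact mem_cl_of_ruleInst hG (.idom p c x y u) (by simp [hpc, hup, hxy])

theorem typ_mem_cl_of_rng {G : Graph} (hG : IsRdfGraph G) {p c x y : Term}
    (hpc : (⟨p, URI.rng, c⟩ : Triple) ∈ Cl G) (hxy : (x, y) ∈ (canI G).extP p) :
    (⟨y, URI.typ, c⟩ : Triple) ∈ Cl G := by
  obtain ⟨u, rfl | hup, hxy⟩ := hxy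
  · exact mem_cl_of_ruleInst hG (.rng u c x y) (by simp [hpc, hxy])
  · exact mem_cl_of_ruleInst hG (.irng p c x y u) (by simp [hpc, hup, hxy])

theorem canI_models {G : Graph} (hG : IsRdfGraph G) : Models (canI G) G where
  interp := canI_isInterp G
  simple τ hτ := by
    refine ⟨Or.inl (Or.inl (mem_uni_p hτ)), ?_⟩
    rw [canI_int_of_mem_uni (mem_uni_s hτ), canI_int_of_mem_uni (mem_uni_o hτ), canI_iv,
      canI_extP_uri hG]
    exact subset_closure hτ
  sp_trans p q r _ _ _ hpq hqr := by
    rw [canI_iv, canI_extP_uri hG] at *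
    exact mem_cl_of_ruleInst hG (.sp_trans p q r) (by simp [hpq, hqr])
  sp_sub p q hpq := by
    rw [canI_iv, canI_extP_uri hG] at hpq
    exact ⟨(mem_canDom_of_mem_cl hpq).1, (mem_canDom_of_mem_cl hpq).2.2,
      canI_extP_subset_of_sp hG hpq⟩
  sc_trans c d e _ _ _ hcd hde := by
    rw [canI_iv, canI_extP_uri hG] at *
    exact mem_cl_of_ruleInst hG (.sc_trans c d e) (by simp [hcd, hde])
  sc_sub c d hcd := by
    rw [canI_iv, canI_extP_uri hG] at hcd
    exact ⟨(mem_canDom_of_mem_cl hcd).1, (mem_canDom_of_mem_cl hcd).2.2,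
      fun x hx => mem_cl_of_ruleInst hG (.sc_mono c d x) (by simp [hcd, mem_canI_extC.mp hx])⟩
  typI1 x c _ := by
    rw [canI_iv, canI_extP_uri hG, mem_canI_extC]
  typI2 p c x y hpc := by
    rw [canI_iv, canI_extP_uri hG] at hpc
    exact typ_mem_cl_of_dom hG hpc
  typI3 p c x y hpc := by
    rw [canI_iv, canI_extP_uri hG] at hpc
    exact typ_mem_cl_of_rng hG hpc
  typII1 e he := Or.inl (Or.inr ⟨e, he, rfl⟩)
  typII2 p c hpc := by
    rw [canI_iv, canI_extP_uri hG] at hpc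
    exact ⟨(mem_canDom_of_mem_cl hpc).1, (mem_canDom_of_mem_cl hpc).2.2⟩
  typII3 p c hpc := by
    rw [canI_iv, canI_extP_uri hG] at hpc
    exact ⟨(mem_canDom_of_mem_cl hpc).1, (mem_canDom_of_mem_cl hpc).2.2⟩
  typII4 x c hxc := by
    rw [canI_iv, canI_extP_uri hG] at hxc
    exact (mem_canDom_of_mem_cl hxc).2.2

theorem mapG_canI_subset_cl {G H : Graph} (hG : IsRdfGraph G) (hH : Models (canI G) H) :
    ↑(mapG (canI G).int H) ⊆ Cl G := by
  intro τ hτ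
  obtain ⟨σ, hσ, rfl⟩ := Finset.mem_image.mp hτ
  have hσ' := (hH.simple σ hσ).2
  rwa [canI_iv, canI_extP_uri hG] at hσ'

theorem rdf_proof_map_last_general (G H : Graph) (hG : IsRdfGraph G)
    (h : Entails G H) :
    ∃ K : Graph, DerivNM RuleInst Triple.okRdf G K ∧
      (K = H ∨ ∃ μ : Term → Term, IsMap μ ∧ mapG μ H ⊆ K) := by
  obtain ⟨K, hGK, -, hK⟩ :=
    exists_derivNM_of_subset_closure G _ (mapG_canI_subset_cl hG (h _ (canI_models hG)))
  exact ⟨K, hGK, Or.inr ⟨(canI G).int, canI_isMap G, hK⟩⟩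

/-- If `G ⊨ H` then there is a proof of `H` from `G` in which the map
rule (1a) is used at most once, and if used, only as the last step:
a derivation without (1a) from `G` to some graph `K`, followed (possibly) by a single
application of the map rule yielding `H`. -/
theorem rdf_proof_map_last (G H : Graph) (hG : IsRdfGraph G) (hH : IsRdfGraph H)
    (h : Entails G H) :
    ∃ K : Graph, DerivNM RuleInst Triple.okRdf G K ∧
      (K = H ∨ ∃ μ : Term → Term, IsMap μ ∧ mapG μ H ⊆ K) :=
  rdf_proof_map_last_general G H hG h

end Rho
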